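/- arXiv:1805.12250 — 5 statements merged into one kernel-verified Lean document; each statement's English description precedes it below -/
import Mathlib

section
/- Let G be a connected simple graph on n vertices, X a nonempty proper subset of V(G), and φ a real number with a(G) ≤ φ ≤ μ₁(G). Then the Laplacian spread satisfies S_L(G) ≥ |φ − ρ_G(X)|. -/
open Finset Polynomial

/-- The number of edges of `G` with one endpoint in `X` and the other in `Xᶜ`
(each such edge corresponds to exactly one ordered pair in `X ×ˢ Xᶜ`). -/
def crossEdgeCard {n : ℕ} (G : SimpleGraph (Fin n)) [DecidableRel G.Adj]
    (X : Finset (Fin n)) : ℕ :=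
  ((X ×ˢ Xᶜ).filter (fun p => G.Adj p.1 p.2)).card

/-- The edge density `ρ_G(X) = n·|E_X(G)|/(|X|·|Xᶜ|)`. -/
noncomputable def edgeDensityR {n : ℕ} (G : SimpleGraph (Fin n)) [DecidableRel G.Adj]
    (X : Finset (Fin n)) : ℝ :=
  ((n : ℝ) * (crossEdgeCard G X : ℝ)) / ((X.card : ℝ) * ((Xᶜ : Finset (Fin n)).card : ℝ))

/-- `μ` is the (weakly decreasing) sequence of eigenvalues of the Laplacian matrix of `G`:
it is antitone and the characteristic polynomial of `L(G)` is `∏ i (x - μ i)`. -/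
def IsLapEigSeq {n : ℕ} (G : SimpleGraph (Fin n)) [DecidableRel G.Adj]
    (μ : Fin n → ℝ) : Prop :=
  (∀ i j : Fin n, i ≤ j → μ j ≤ μ i) ∧
    (G.lapMatrix ℝ).charpoly = ∏ i : Fin n, (X - C (μ i))

/-
The edge density `ρ_G(X)` is the Rayleigh quotient `xᵀ L x / xᵀ x` of the Laplacian at the cut
vector `x = |Xᶜ| · 1_X - |X| · 1_{Xᶜ}`: each cut edge contributes `n²` to `xᵀ L x`, and
`xᵀ x = n |X| |Xᶜ|`. Expanded in an orthonormal eigenbasis, this quotient is at most `μ₁`.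
Since `x ⊥ 1` and the kernel of the Laplacian of a connected graph consists of the constant
vectors, `x` has no component along the eigenvalue `0`; as `μₙ = 0`, every nonzero eigenvalue is
at least `a(G)`, hence so is the quotient. Thus `φ` and `ρ_G(X)` both lie in `[a(G), μ₁]`.
-/

open Matrix

namespace Matrix.IsHermitian

variable {n : Type*} [Fintype n] [DecidableEq n] {A : Matrix n n ℝ} (hA : A.IsHermitian)

theorem dotProduct_eq_sum_eigenvectorBasis (x y : n → ℝ) :
    x ⬝ᵥ y = ∑ i, (x ⬝ᵥ ⇑(hA.eigenvectorBasis i)) * (⇑(hA.eigenvectorBasis i) ⬝ᵥ y) := by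
  have := hA.eigenvectorBasis.sum_inner_mul_inner (WithLp.toLp 2 x) (WithLp.toLp 2 y)
  simp only [EuclideanSpace.inner_eq_star_dotProduct, star_trivial] at this
  simpa [dotProduct_comm] using this.symm

theorem dotProduct_self_eq_sum_sq (x : n → ℝ) :
    x ⬝ᵥ x = ∑ i, (x ⬝ᵥ ⇑(hA.eigenvectorBasis i)) ^ 2 := by
  rw [hA.dotProduct_eq_sum_eigenvectorBasis]
  simp_rw [dotProduct_comm _ x, sq]

theorem dotProduct_mulVec_eq_sum_eigenvalues (x : n → ℝ) :
    x ⬝ᵥ (A *ᵥ x) = ∑ i, hA.eigenvalues i * (x ⬝ᵥ ⇑(hA.eigenvectorBasis i)) ^ 2 := by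
  rw [hA.dotProduct_eq_sum_eigenvectorBasis]
  refine sum_congr rfl fun i _ => ?_
  have hsymm : Aᵀ = A := by simpa [conjTranspose_eq_transpose_of_trivial] using hA.eq
  rw [dotProduct_mulVec, ← mulVec_transpose, hsymm, hA.mulVec_eigenvectorBasis,
    smul_dotProduct, smul_eq_mul, dotProduct_comm]
  ring

theorem dotProduct_mulVec_le_of_forall_eigenvalues_le {c : ℝ} (hc : ∀ i, hA.eigenvalues i ≤ c)
    (x : n → ℝ) : x ⬝ᵥ (A *ᵥ x) ≤ c * (x ⬝ᵥ x) := by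
  rw [hA.dotProduct_mulVec_eq_sum_eigenvalues, hA.dotProduct_self_eq_sum_sq, mul_sum]
  gcongr
  exact hc _

theorem le_dotProduct_mulVec_of_forall_eigenvalues_ne_zero {c : ℝ}
    (hc : ∀ i, hA.eigenvalues i ≠ 0 → c ≤ hA.eigenvalues i) {x : n → ℝ}
    (hx : ∀ v, A *ᵥ v = 0 → x ⬝ᵥ v = 0) : c * (x ⬝ᵥ x) ≤ x ⬝ᵥ (A *ᵥ x) := by
  rw [hA.dotProduct_mulVec_eq_sum_eigenvalues, hA.dotProduct_self_eq_sum_sq, mul_sum]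
  refine sum_le_sum fun i _ => ?_
  by_cases h0 : hA.eigenvalues i = 0
  · have hker : A *ᵥ ⇑(hA.eigenvectorBasis i) = 0 := by
      rw [hA.mulVec_eigenvectorBasis, h0, zero_smul]
    simp [hx _ hker]
  · exact mul_le_mul_of_nonneg_right (hc i h0) (sq_nonneg _)

theorem range_eigenvalues_eq_of_charpoly_eq {μ : n → ℝ}
    (hμ : A.charpoly = ∏ i, (X - C (μ i))) : Set.range hA.eigenvalues = Set.range μ := by
  have hroots := hA.roots_charpoly_eq_eigenvalues
  rw [hμ, roots_prod _ _ (prod_ne_zero_iff.mpr fun i _ => X_sub_C_ne_zero (μ i))] at hroots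
  simp only [roots_X_sub_C, Multiset.bind_singleton] at hroots
  ext t
  simpa using congrArg (t ∈ ·) hroots.symm

end Matrix.IsHermitian

noncomputable def cutVector {V : Type*} [Fintype V] [DecidableEq V] (X : Finset V) : V → ℝ :=
  fun v => if v ∈ X then (#Xᶜ : ℝ) else -(#X : ℝ)

section cutVector

variable {V : Type*} [Fintype V] [DecidableEq V] (X : Finset V)

theorem sum_cutVector : ∑ v, cutVector X v = 0 := by
  simp [cutVector, Finset.sum_ite, Finset.filter_notMem_eq_sdiff, ← Finset.compl_eq_univ_sdiff,
    mul_comm]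

theorem cutVector_dotProduct_self :
    cutVector X ⬝ᵥ cutVector X = #X * #Xᶜ * Fintype.card V := by
  have hcard : (#X : ℝ) + #Xᶜ = Fintype.card V := by exact_mod_cast X.card_add_card_compl
  simp [dotProduct, cutVector, apply_ite (fun t : ℝ => t * t), Finset.sum_ite,
    Finset.filter_notMem_eq_sdiff, ← Finset.compl_eq_univ_sdiff, ← hcard]
  ring

end cutVector

namespace SimpleGraph

theorem Connected.dotProduct_eq_zero_of_lapMatrix_mulVec_eq_zero {V : Type*} [Fintype V]
    [DecidableEq V] {G : SimpleGraph V} [DecidableRel G.Adj] (hG : G.Connected) {x : V → ℝ}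
    (hx : ∑ i, x i = 0) {v : V → ℝ} (hv : G.lapMatrix ℝ *ᵥ v = 0) : x ⬝ᵥ v = 0 := by
  obtain ⟨w⟩ := hG.nonempty
  have hconst : ∀ i, v i = v w :=
    fun i => (lapMatrix_mulVec_eq_zero_iff_forall_reachable G).mp hv i w (hG.preconnected i w)
  simp only [dotProduct, hconst, ← Finset.sum_mul, hx, zero_mul]

variable {n : ℕ} (G : SimpleGraph (Fin n)) [DecidableRel G.Adj]

theorem dotProduct_lapMatrix_mulVec_ite (X : Finset (Fin n)) (p q : ℝ) :
    (fun v => if v ∈ X then p else q) ⬝ᵥ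
      (G.lapMatrix ℝ *ᵥ fun v => if v ∈ X then p else q) = (p - q) ^ 2 * crossEdgeCard G X := by
  set x : Fin n → ℝ := fun v => if v ∈ X then p else q
  set c : Fin n → Fin n → ℝ := fun i j => if i ∈ X ∧ j ∈ Xᶜ ∧ G.Adj i j then 1 else 0
  -- an adjacent pair contributes `(p - q) ^ 2` iff it crosses the cut, in one of two orientations
  have hpoint : ∀ i j,
      (if G.Adj i j then (x i - x j) ^ 2 else 0) = (p - q) ^ 2 * (c i j + c j i) := by
    intro i j
    by_cases hij : G.Adj i j <;> by_cases hi : i ∈ X <;> by_cases hj : j ∈ X <;>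
      simp [x, c, hij, hi, hj, G.adj_comm j i, sub_sq_comm p q]
  have hcard : ∑ i, ∑ j, c i j = crossEdgeCard G X := by
    rw [crossEdgeCard, Finset.card_filter, Nat.cast_sum, Finset.sum_product]
    simp only [c, ite_and, Finset.sum_ite_irrel, Finset.sum_const_zero, Fintype.sum_ite_mem]
    push_cast
    rfl
  rw [← toLinearMap₂'_apply', lapMatrix_toLinearMap₂']
  simp_rw [hpoint, ← Finset.mul_sum, Finset.sum_add_distrib]
  rw [Finset.sum_comm (f := fun i j => c j i), hcard]
  ring

theorem cutVector_dotProduct_lapMatrix_mulVec (X : Finset (Fin n)) :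
    cutVector X ⬝ᵥ (G.lapMatrix ℝ *ᵥ cutVector X) = n ^ 2 * crossEdgeCard G X := by
  have hcard : (#Xᶜ : ℝ) - -(#X : ℝ) = n := by
    rw [sub_neg_eq_add, add_comm]
    exact_mod_cast (X.card_add_card_compl).trans (Fintype.card_fin n)
  rw [← hcard]
  exact G.dotProduct_lapMatrix_mulVec_ite X _ _

theorem edgeDensityR_eq_div (X : Finset (Fin n)) :
    edgeDensityR G X =
      cutVector X ⬝ᵥ (G.lapMatrix ℝ *ᵥ cutVector X) / (cutVector X ⬝ᵥ cutVector X) := by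
  rw [G.cutVector_dotProduct_lapMatrix_mulVec, cutVector_dotProduct_self, Fintype.card_fin,
    edgeDensityR]
  rcases Nat.eq_zero_or_pos n with rfl | hn
  · simp
  · rw [sq, mul_assoc, mul_comm _ (_ * _), mul_div_mul_right _ _ (by positivity : (n : ℝ) ≠ 0)]

end SimpleGraph

namespace IsLapEigSeq

variable {n : ℕ} {G : SimpleGraph (Fin n)} [DecidableRel G.Adj] {μ : Fin n → ℝ}

theorem range_eigenvalues (hμ : IsLapEigSeq G μ) :
    Set.range (G.isHermitian_lapMatrix ℝ).eigenvalues = Set.range μ :=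
  (G.isHermitian_lapMatrix ℝ).range_eigenvalues_eq_of_charpoly_eq hμ.2

theorem exists_eigenvalues_eq (hμ : IsLapEigSeq G μ) (i : Fin n) :
    ∃ j, (G.isHermitian_lapMatrix ℝ).eigenvalues i = μ j :=
  (hμ.range_eigenvalues ▸ Set.mem_range_self i :).imp fun _ => Eq.symm

theorem nonneg (hμ : IsLapEigSeq G μ) (j : Fin n) : 0 ≤ μ j := by
  obtain ⟨i, hi⟩ := (hμ.range_eigenvalues.symm ▸ Set.mem_range_self j :)
  exact hi ▸ (G.posSemidef_lapMatrix ℝ).eigenvalues_nonneg i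

theorem apply_last_eq_zero (hμ : IsLapEigSeq G μ) (hn : 0 < n) :
    μ ⟨n - 1, Nat.sub_lt hn one_pos⟩ = 0 := by
  have : Nonempty (Fin n) := ⟨⟨0, hn⟩⟩
  obtain ⟨i, -, hi⟩ := Finset.prod_eq_zero_iff.mp
    (((G.isHermitian_lapMatrix ℝ).det_eq_prod_eigenvalues).symm.trans G.det_lapMatrix_eq_zero)
  obtain ⟨j, hj⟩ := hμ.exists_eigenvalues_eq i
  refine le_antisymm ?_ (hμ.nonneg _)
  calc μ ⟨n - 1, _⟩ ≤ μ j := hμ.1 _ _ (Fin.le_iff_val_le_val.mpr (by dsimp; omega))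
    _ = 0 := by simpa [hj] using hi

theorem eigenvalues_le (hμ : IsLapEigSeq G μ) (hn : 0 < n) (i : Fin n) :
    (G.isHermitian_lapMatrix ℝ).eigenvalues i ≤ μ ⟨0, hn⟩ := by
  obtain ⟨j, hj⟩ := hμ.exists_eigenvalues_eq i
  exact hj ▸ hμ.1 _ _ (Fin.mk_le_of_le_val (Nat.zero_le _))

theorem le_eigenvalues_of_ne_zero (hμ : IsLapEigSeq G μ) (hn : 2 ≤ n) {i : Fin n}
    (hi : (G.isHermitian_lapMatrix ℝ).eigenvalues i ≠ 0) :
    μ ⟨n - 2, Nat.sub_lt_self two_pos hn⟩ ≤ (G.isHermitian_lapMatrix ℝ).eigenvalues i := by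
  obtain ⟨j, hj⟩ := hμ.exists_eigenvalues_eq i
  rw [hj] at hi ⊢
  have hj_ne : (j : ℕ) ≠ n - 1 := fun h => by
    rw [show j = ⟨n - 1, by omega⟩ from Fin.ext h, hμ.apply_last_eq_zero (by omega)] at hi
    exact hi rfl
  exact hμ.1 _ _ (Fin.le_iff_val_le_val.mpr (by dsimp; omega))

theorem edgeDensityR_le (hμ : IsLapEigSeq G μ) (hn : 0 < n) (X : Finset (Fin n)) :
    edgeDensityR G X ≤ μ ⟨0, hn⟩ := by
  rw [G.edgeDensityR_eq_div]
  exact div_le_of_le_mul₀ (dotProduct_self_star_nonneg _) (hμ.nonneg _)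
    ((G.isHermitian_lapMatrix ℝ).dotProduct_mulVec_le_of_forall_eigenvalues_le
      (hμ.eigenvalues_le hn) _)

theorem le_edgeDensityR (hμ : IsLapEigSeq G μ) (hn : 2 ≤ n) (hG : G.Connected)
    {X : Finset (Fin n)} (hX : X.Nonempty) (hXp : X ≠ univ) :
    μ ⟨n - 2, Nat.sub_lt_self two_pos hn⟩ ≤ edgeDensityR G X := by
  have hXc : Xᶜ.Nonempty := nonempty_iff_ne_empty.mpr (mt (compl_eq_empty_iff X).mp hXp)
  have hpos : 0 < cutVector X ⬝ᵥ cutVector X := by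
    rw [cutVector_dotProduct_self, Fintype.card_fin]
    have := hX.card_pos; have := hXc.card_pos; have : 0 < n := by omega
    positivity
  rw [G.edgeDensityR_eq_div, le_div_iff₀ hpos]
  exact (G.isHermitian_lapMatrix ℝ).le_dotProduct_mulVec_of_forall_eigenvalues_ne_zero
    (fun _ => hμ.le_eigenvalues_of_ne_zero hn)
    (fun _ => hG.dotProduct_eq_zero_of_lapMatrix_mulVec_eq_zero (sum_cutVector X))

end IsLapEigSeq

/-- for a connected graph `G`, a nonempty proper subset `X` and
`a(G) ≤ φ ≤ μ₁`, the Laplacian spread satisfies `S_L(G) ≥ |φ - ρ_G(X)|`. -/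
theorem laplacianSpread_ge_abs_sub_edgeDensity
    {n : ℕ} (hn : 2 ≤ n) (G : SimpleGraph (Fin n)) [DecidableRel G.Adj]
    (hG : G.Connected)
    (μ : Fin n → ℝ) (hμ : IsLapEigSeq G μ)
    (X : Finset (Fin n)) (hX : X.Nonempty) (hXp : X ≠ univ)
    (φ : ℝ) (hφ₁ : μ ⟨n - 2, by omega⟩ ≤ φ) (hφ₂ : φ ≤ μ ⟨0, by omega⟩) :
    |φ - edgeDensityR G X| ≤ μ ⟨0, by omega⟩ - μ ⟨n - 2, by omega⟩ := by
  have hlo := hμ.le_edgeDensityR hn hG hX hXp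
  have hhi := hμ.edgeDensityR_le (by omega) X
  exact abs_sub_le_iff.mpr ⟨by linarith, by linarith⟩
end

section
/- Let G be a simple graph with n vertices, m edges, degree sequence d₁, …, dₙ, and Laplacian eigenvalues μ₁ ≥ … ≥ μ_{n−1} ≥ μₙ = 0. For i ≠ j let ϰ_{ij} = |N(v_i) ∩ N(v_j)| be the number of common neighbors of v_i and v_j. Then Σ_{i=1}^{n−1} μᵢ⁴ = Υ, where Υ = Σ_{i=1}^{n}(dᵢ⁴ + 3dᵢ³) + Zg(G) + Σ_{i=1}^{n} [ Σ_{s≠i} ϰ_{is}² + Σ_{v_s ∼ v_i} ( 2dᵢ(d_s − ϰ_{si}) + d_s(d_s − 2ϰ_{si}) ) ] and Zg(G) = Σ_{i=1}^{n} dᵢ². -/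
open Finset Polynomial

/-- The number `ϰ_{ij}` of common neighbors of `i` and `j`. -/
def commonNbrs {n : ℕ} (G : SimpleGraph (Fin n)) [DecidableRel G.Adj]
    (i j : Fin n) : ℕ :=
  (univ.filter (fun w => G.Adj i w ∧ G.Adj j w)).card

section CharpolyAux

variable {m : Type*} [Fintype m] [DecidableEq m] {R : Type*} [CommRing R]

private lemma my_charpoly_conj (U B V : Matrix m m R) (hUV : U * V = 1) :
    (U * B * V).charpoly = B.charpoly := by
  have hmap : U.map (C : R → R[X]) * V.map C = 1 := by
    have := congrArg (fun M : Matrix m m R => (C : R →+* R[X]).mapMatrix M) hUV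
    simpa [RingHom.mapMatrix_apply] using this
  have hcm : Matrix.charmatrix (U * B * V) = U.map C * Matrix.charmatrix B * V.map C := by
    unfold Matrix.charmatrix
    rw [mul_sub, sub_mul]
    congr 1
    · rw [((Matrix.scalar_commute (X : R[X]) (fun r' => Commute.all _ _)
        (U.map C))).symm.eq, mul_assoc, hmap, mul_one]
    · simp [RingHom.mapMatrix_apply, ← Matrix.map_mul, Matrix.mul_assoc]
  unfold Matrix.charpoly
  rw [hcm, Matrix.det_mul, Matrix.det_mul, mul_right_comm, ← Matrix.det_mul, hmap,
    Matrix.det_one, one_mul]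

private lemma my_charpoly_diagonal (d : m → R) :
    (Matrix.diagonal d).charpoly = ∏ i, (X - C (d i)) := by
  have h : Matrix.charmatrix (Matrix.diagonal d) = Matrix.diagonal fun i => X - C (d i) := by
    ext i j
    by_cases h : i = j
    · subst h; simp
    · simp [h, Matrix.diagonal_apply_ne _ h]
  rw [Matrix.charpoly, h, Matrix.det_diagonal]

end CharpolyAux

private lemma sum_pow_eq_trace_pow {N : ℕ} (A : Matrix (Fin N) (Fin N) ℝ)
    (hA : A.IsHermitian) (μ : Fin N → ℝ) (h : A.charpoly = ∏ i, (X - C (μ i))) (k : ℕ) :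
    ∑ i, μ i ^ k = (A ^ k).trace := by
  set U : Matrix (Fin N) (Fin N) ℝ := (hA.eigenvectorUnitary : Matrix (Fin N) (Fin N) ℝ) with hU
  have hU1 : U * star U = 1 := Matrix.mem_unitaryGroup_iff.mp hA.eigenvectorUnitary.2
  have hU2 : star U * U = 1 := Matrix.mem_unitaryGroup_iff'.mp hA.eigenvectorUnitary.2
  have hspec : A = U * Matrix.diagonal hA.eigenvalues * star U := by
    have := hA.spectral_theorem
    simpa [Function.comp] using this
  have hchar : A.charpoly = ∏ i, (X - C (hA.eigenvalues i)) := by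
    have h2 := congrArg Matrix.charpoly hspec
    rw [my_charpoly_conj _ _ _ hU1, my_charpoly_diagonal] at h2
    exact h2
  have hroots : ∀ f : Fin N → ℝ, (∏ i, (X - C (f i))).roots = Multiset.map f Finset.univ.val := by
    intro f
    rw [show (∏ i, (X - C (f i))) = ((Multiset.map f Finset.univ.val).map fun a => X - C a).prod by
      rw [Multiset.map_map]; rfl]
    exact roots_multiset_prod_X_sub_C _
  have hms : Multiset.map μ Finset.univ.val = Multiset.map hA.eigenvalues Finset.univ.val := by
    rw [← hroots, ← hroots, ← h, ← hchar]
  have hsum : ∀ f : Fin N → ℝ,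
      ∑ i, f i ^ k = ((Multiset.map f Finset.univ.val).map (· ^ k)).sum := by
    intro f
    rw [Multiset.map_map]; rfl
  have hpow : ∀ j : ℕ, A ^ j = U * (Matrix.diagonal hA.eigenvalues) ^ j * star U := by
    intro j
    induction j with
    | zero => simp [pow_zero, hU1]
    | succ j ih =>
      calc A ^ (j + 1) = A ^ j * A := pow_succ A j
        _ = U * Matrix.diagonal hA.eigenvalues ^ j * star U * A := by rw [ih]
        _ = U * Matrix.diagonal hA.eigenvalues ^ j * star U *
            (U * Matrix.diagonal hA.eigenvalues * star U) :=
          congrArg (fun M => U * Matrix.diagonal hA.eigenvalues ^ j * star U * M) hspec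
        _ = U * Matrix.diagonal hA.eigenvalues ^ (j + 1) * star U := by
            rw [pow_succ]
            simp only [Matrix.mul_assoc]
            rw [← Matrix.mul_assoc (star U) U, hU2, Matrix.one_mul]
  rw [hsum, hms, hpow k, Matrix.trace_mul_comm, ← Matrix.mul_assoc, hU2, Matrix.one_mul,
    Matrix.diagonal_pow, Matrix.trace_diagonal]
  rw [← hsum]
  rfl

section GraphAux

variable {n : ℕ} (G : SimpleGraph (Fin n)) [DecidableRel G.Adj]

private def aF : Fin n → Fin n → ℝ := fun i j => if G.Adj i j then 1 else 0

private def dF : Fin n → ℝ := fun i => (G.degree i : ℝ)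

private def kF : Fin n → Fin n → ℝ := fun i j => ∑ k, aF G i k * aF G j k

private lemma aF_symm (i j : Fin n) : aF G i j = aF G j i := by
  simp [aF, G.adj_comm]

private lemma aF_ii (i : Fin n) : aF G i i = 0 := by simp [aF]

private lemma aF_sq (i j : Fin n) : aF G i j * aF G i j = aF G i j := by
  by_cases h : G.Adj i j <;> simp [aF, h]

private lemma sum_aF (i : Fin n) : ∑ j, aF G i j = dF G i := by
  simp only [aF, Finset.sum_boole, dF]
  congr 1
  rw [SimpleGraph.degree, SimpleGraph.neighborFinset_eq_filter]

private lemma kF_symm (i j : Fin n) : kF G i j = kF G j i := by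
  exact Finset.sum_congr rfl fun k _ => mul_comm _ _

private lemma kF_ii (i : Fin n) : kF G i i = dF G i := by
  rw [kF, ← sum_aF G i]
  exact Finset.sum_congr rfl fun k _ => aF_sq G i k

private lemma commonNbrs_cast (i j : Fin n) : ((commonNbrs G i j : ℕ) : ℝ) = kF G i j := by
  rw [commonNbrs, kF, ← Finset.sum_boole]
  exact Finset.sum_congr rfl fun k _ => by
    by_cases h1 : G.Adj i k <;> by_cases h2 : G.Adj j k <;> simp [aF, h1, h2]

private lemma lap_apply (i j : Fin n) :
    G.lapMatrix ℝ i j = (if i = j then dF G i else 0) - aF G i j := by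
  simp [SimpleGraph.lapMatrix, SimpleGraph.degMatrix, Matrix.sub_apply,
    Matrix.diagonal_apply, aF, dF]

private lemma lap_sq_apply (i j : Fin n) :
    (G.lapMatrix ℝ * G.lapMatrix ℝ) i j
      = (if i = j then dF G i ^ 2 else 0) - (dF G i + dF G j) * aF G i j + kF G i j := by
  rw [Matrix.mul_apply]
  have e : ∀ k, G.lapMatrix ℝ i k * G.lapMatrix ℝ k j
      = ((if i = k then dF G i * ((if k = j then dF G k else 0) - aF G k j) else 0)
        - (if k = j then aF G i k * dF G k else 0)) + aF G i k * aF G k j := by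
    intro k; rw [lap_apply, lap_apply]; split_ifs <;> ring
  rw [Finset.sum_congr rfl fun k _ => e k, Finset.sum_add_distrib, Finset.sum_sub_distrib,
    Finset.sum_ite_eq, Finset.sum_ite_eq']
  have hk : kF G i j = ∑ k, aF G i k * aF G k j :=
    Finset.sum_congr rfl fun k _ => by rw [aF_symm G j k]
  rw [← hk]
  simp only [Finset.mem_univ, if_true]
  by_cases h : i = j
  · subst h; simp; ring
  · rw [if_neg h, if_neg h]; ring

end GraphAux

/-- since `μₙ = 0`, the sum of the fourth powers of the Laplacian
eigenvalues `Σ_{i=1}^{n-1} μᵢ⁴ (= Σ_{i=1}^{n} μᵢ⁴)` equals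
`Υ = Σᵢ(dᵢ⁴+3dᵢ³) + Zg(G) + Σᵢ[Σ_{s≠i} ϰ_{is}² + Σ_{s∼i}(2dᵢ(dₛ-ϰ_{si}) + dₛ(dₛ-2ϰ_{si}))]`. -/
theorem sum_pow_four_lapEigenvalues_eq_upsilon
    {n : ℕ} (hn : 1 ≤ n) (G : SimpleGraph (Fin n)) [DecidableRel G.Adj]
    (μ : Fin n → ℝ) (hμ : IsLapEigSeq G μ) (hlast : μ ⟨n - 1, by omega⟩ = 0) :
    ∑ i : Fin n, (μ i) ^ 4 =
      (∑ i : Fin n, ((G.degree i : ℝ) ^ 4 + 3 * (G.degree i : ℝ) ^ 3))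
        + (∑ i : Fin n, (G.degree i : ℝ) ^ 2)
        + ∑ i : Fin n,
            ((∑ s ∈ univ.erase i, (commonNbrs G i s : ℝ) ^ 2)
              + ∑ s ∈ G.neighborFinset i,
                  (2 * (G.degree i : ℝ) * ((G.degree s : ℝ) - (commonNbrs G s i : ℝ))
                    + (G.degree s : ℝ) * ((G.degree s : ℝ) - 2 * (commonNbrs G s i : ℝ)))) := by
  obtain ⟨-, hcp⟩ := hμ
  have hherm : (G.lapMatrix ℝ).IsHermitian := (G.posSemidef_lapMatrix (R := ℝ)).1
  rw [sum_pow_eq_trace_pow (G.lapMatrix ℝ) hherm μ hcp 4]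
  have h4 : (G.lapMatrix ℝ) ^ 4
      = (G.lapMatrix ℝ * G.lapMatrix ℝ) * (G.lapMatrix ℝ * G.lapMatrix ℝ) := by
    rw [show (4 : ℕ) = 2 * 2 from rfl, pow_mul, pow_two, pow_two]
  rw [h4]
  have htr : ((G.lapMatrix ℝ * G.lapMatrix ℝ) * (G.lapMatrix ℝ * G.lapMatrix ℝ)).trace
      = ∑ i, ∑ j, (G.lapMatrix ℝ * G.lapMatrix ℝ) i j * (G.lapMatrix ℝ * G.lapMatrix ℝ) j i := by
    simp [Matrix.trace, Matrix.mul_apply, Matrix.diag]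
  rw [htr]
  rw [← Finset.sum_add_distrib, ← Finset.sum_add_distrib]
  refine Finset.sum_congr rfl fun i _ => ?_
  have hdd : ∀ i : Fin n, ((G.degree i : ℕ) : ℝ) = dF G i := fun _ => rfl
  simp only [lap_sq_apply, hdd]
  have e1 : ∑ s ∈ univ.erase i, ((commonNbrs G i s : ℕ) : ℝ) ^ 2
      = (∑ j, kF G i j ^ 2) - dF G i ^ 2 := by
    rw [Finset.sum_erase_eq_sub (Finset.mem_univ i)]
    simp only [commonNbrs_cast, kF_ii]
  have e2 : ∑ s ∈ G.neighborFinset i,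
        (2 * dF G i * (dF G s - ((commonNbrs G s i : ℕ) : ℝ))
          + dF G s * (dF G s - 2 * ((commonNbrs G s i : ℕ) : ℝ)))
      = ∑ j, aF G i j * (2 * dF G i * (dF G j - kF G i j)
          + dF G j * (dF G j - 2 * kF G i j)) := by
    rw [SimpleGraph.neighborFinset_eq_filter, Finset.sum_filter]
    refine Finset.sum_congr rfl fun j _ => ?_
    by_cases h : G.Adj i j
    · rw [if_pos h]
      have hk : kF G j i = kF G i j := kF_symm G j i
      simp only [commonNbrs_cast, hk]
      simp [aF, h]
    · rw [if_neg h]; simp [aF, h]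
  rw [e1, e2]
  have claim1 : ∀ j,
      ((if i = j then dF G i ^ 2 else 0) - (dF G i + dF G j) * aF G i j + kF G i j)
        * ((if j = i then dF G j ^ 2 else 0) - (dF G j + dF G i) * aF G j i + kF G j i)
      = (if i = j then (dF G i ^ 2 + dF G i) ^ 2 - dF G i ^ 2 else 0)
        + (kF G i j ^ 2 + aF G i j * (2 * dF G i * dF G j + dF G j ^ 2 + dF G i ^ 2)
            - 2 * (dF G i + dF G j) * (aF G i j * kF G i j)) := by
    intro j
    by_cases h : i = j
    · subst h
      rw [if_pos rfl, if_pos rfl, aF_ii, kF_ii]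
      ring
    · rw [if_neg h, if_neg (fun hh => h hh.symm), if_neg h, aF_symm G j i, kF_symm G j i]
      linear_combination (dF G i + dF G j) ^ 2 * aF_sq G i j
  rw [Finset.sum_congr rfl fun j _ => claim1 j, Finset.sum_add_distrib, Finset.sum_ite_eq]
  simp only [Finset.mem_univ, if_true]
  have hsplit : ∑ j, (kF G i j ^ 2 + aF G i j * (2 * dF G i * dF G j + dF G j ^ 2 + dF G i ^ 2)
        - 2 * (dF G i + dF G j) * (aF G i j * kF G i j))
      = (∑ j, kF G i j ^ 2)
        + ((∑ j, aF G i j * (2 * dF G i * (dF G j - kF G i j)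
            + dF G j * (dF G j - 2 * kF G i j))) + dF G i ^ 2 * ∑ j, aF G i j) := by
    rw [Finset.mul_sum, ← Finset.sum_add_distrib, ← Finset.sum_add_distrib]
    exact Finset.sum_congr rfl fun j _ => by ring
  rw [hsplit, sum_aF]
  ring
end

section
/- Let G be a simple graph with n ≥ 2 vertices, m edges and Laplacian eigenvalues μ₁ ≥ … ≥ μ_{n−1} ≥ μₙ = 0. With Υ = trace(L(G)⁴) = Σ_{i=1}^{n−1} μᵢ⁴ and Zg(G) the first Zagreb index, the Laplacian spread satisfies ( (Υ(n−1) − (Zg(G)+2m)²) / ((n−1)(Zg(G)+2m)) )^{1/2} ≤ S_L(G). -/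
open Finset Polynomial

namespace Matrix

variable {ι : Type*} [Fintype ι] [DecidableEq ι]

theorem trace_eq_sum_of_charpoly_eq_prod {R : Type*} [CommRing R] {A : Matrix ι ι R}
    {μ : ι → R} (h : A.charpoly = ∏ i, (X - C (μ i))) : A.trace = ∑ i, μ i := by
  rw [trace_eq_neg_charpoly_nextCoeff, h, prod_X_sub_C_nextCoeff, neg_neg]

theorem det_eq_prod_of_charpoly_eq_prod {R : Type*} [CommRing R] {A : Matrix ι ι R}
    {μ : ι → R} (h : A.charpoly = ∏ i, (X - C (μ i))) : A.det = ∏ i, μ i := by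
  rw [det_eq_sign_charpoly_coeff, h, coeff_zero_eq_eval_zero, eval_prod]
  simp [Finset.prod_neg, ← mul_assoc, ← mul_pow]

namespace IsHermitian

variable {A : Matrix ι ι ℝ} {μ : ι → ℝ}

theorem map_eigenvalues_eq_of_charpoly_eq_prod (hA : A.IsHermitian)
    (h : A.charpoly = ∏ i, (X - C (μ i))) : univ.val.map hA.eigenvalues = univ.val.map μ := by
  have hroots := hA.roots_charpoly_eq_eigenvalues
  rw [h, roots_prod _ _ (prod_ne_zero_iff.2 fun i _ ↦ X_sub_C_ne_zero (μ i))] at hroots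
  simpa using hroots.symm

theorem trace_pow_eq_sum_pow_of_charpoly_eq_prod (hA : A.IsHermitian)
    (h : A.charpoly = ∏ i, (X - C (μ i))) (k : ℕ) : (A ^ k).trace = ∑ i, μ i ^ k := by
  rw [← cfc_pow_id (R := ℝ) A k hA.isSelfAdjoint,
    trace_eq_sum_of_charpoly_eq_prod (hA.charpoly_cfc_eq _)]
  have := congrArg (fun s ↦ (s.map (· ^ k)).sum) (hA.map_eigenvalues_eq_of_charpoly_eq_prod h)
  simp only [Multiset.map_map] at this
  simp only [RCLike.ofReal_real_eq_id, id]
  exact this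

end IsHermitian

theorem PosSemidef.nonneg_of_charpoly_eq_prod {A : Matrix ι ι ℝ} (hA : A.PosSemidef) {μ : ι → ℝ}
    (h : A.charpoly = ∏ i, (X - C (μ i))) (i : ι) : 0 ≤ μ i := by
  have hi : μ i ∈ univ.val.map hA.isHermitian.eigenvalues := by
    rw [hA.isHermitian.map_eigenvalues_eq_of_charpoly_eq_prod h]
    exact Multiset.mem_map_of_mem μ (mem_univ i)
  obtain ⟨j, -, hj⟩ := Multiset.mem_map.1 hi
  exact hj ▸ hA.eigenvalues_nonneg j

end Matrix

namespace SimpleGraph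

variable {V : Type*} [Fintype V] [DecidableEq V] (G : SimpleGraph V) [DecidableRel G.Adj]

theorem trace_lapMatrix_sq (R : Type*) [CommRing R] :
    ((G.lapMatrix R) ^ 2).trace = ∑ v, (G.degree v : R) ^ 2 + 2 * #G.edgeFinset := by
  have hdiag : (G.degMatrix R * G.adjMatrix R).trace = 0 := by
    simp only [degMatrix, Matrix.trace, Matrix.diag_apply, Matrix.diagonal_mul, adjMatrix_apply,
      G.irrefl, if_false, mul_zero, sum_const_zero]
  have hadj : (G.adjMatrix R * G.adjMatrix R).trace = 2 * #G.edgeFinset := by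
    simp only [Matrix.trace, Matrix.diag_apply, adjMatrix_mul_self_apply_self]
    exact_mod_cast congrArg (Nat.cast : ℕ → R) G.sum_degrees_eq_twice_card_edges
  rw [lapMatrix, sq, sub_mul, mul_sub, mul_sub, Matrix.trace_sub, Matrix.trace_sub,
    Matrix.trace_sub, Matrix.trace_mul_comm (G.adjMatrix R), hdiag, hadj]
  simp [degMatrix, Matrix.trace, sq]

end SimpleGraph

theorem sq_sub_mul_sq_le {a b x : ℝ} (ha : 0 ≤ a) (hax : a ≤ x) (hxb : x ≤ b) :
    (x ^ 2 - a * b) ^ 2 ≤ (b - a) ^ 2 * x ^ 2 := by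
  have hfactor : (x ^ 2 - a * b) ^ 2 - (b - a) ^ 2 * x ^ 2
      = ((x - a) * (x + b)) * ((x + a) * (x - b)) := by
    ring
  have hsign : ((x - a) * (x + b)) * ((x + a) * (x - b)) ≤ 0 :=
    mul_nonpos_of_nonneg_of_nonpos (mul_nonneg (by linarith) (by linarith))
      (mul_nonpos_of_nonneg_of_nonpos (by linarith) (by linarith))
  linarith

namespace Finset

variable {ι : Type*} (s : Finset ι)

theorem card_mul_sum_sq_sub_sq_sum_le (f : ι → ℝ) (c : ℝ) :
    #s * ∑ i ∈ s, f i ^ 2 - (∑ i ∈ s, f i) ^ 2 ≤ #s * ∑ i ∈ s, (f i - c) ^ 2 := by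
  have hexpand :
      ∑ i ∈ s, (f i - c) ^ 2 = ∑ i ∈ s, f i ^ 2 - 2 * c * ∑ i ∈ s, f i + #s * c ^ 2 := by
    simp only [sub_sq, sum_add_distrib, sum_sub_distrib, sum_const, nsmul_eq_mul, ← sum_mul,
      ← mul_sum]
    ring
  rw [hexpand]
  nlinarith [sq_nonneg (#s * c - ∑ i ∈ s, f i)]

theorem card_mul_sum_pow_four_sub_sq_le {f : ι → ℝ} {a b : ℝ} (ha : 0 ≤ a)
    (hf : ∀ i ∈ s, f i ∈ Set.Icc a b) :
    #s * ∑ i ∈ s, f i ^ 4 - (∑ i ∈ s, f i ^ 2) ^ 2 ≤ #s * (b - a) ^ 2 * ∑ i ∈ s, f i ^ 2 := by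
  have hpt : ∑ i ∈ s, (f i ^ 2 - a * b) ^ 2 ≤ (b - a) ^ 2 * ∑ i ∈ s, f i ^ 2 := by
    rw [mul_sum]
    exact sum_le_sum fun i hi ↦ sq_sub_mul_sq_le ha (hf i hi).1 (hf i hi).2
  have := s.card_mul_sum_sq_sub_sq_sum_le (fun i ↦ f i ^ 2) (a * b)
  simp only [← pow_mul] at this
  rw [mul_assoc]
  exact this.trans (mul_le_mul_of_nonneg_left hpt (Nat.cast_nonneg _))

end Finset

theorem Antitone.card_sub_one_mul_sum_pow_four_sub_sq_le {n : ℕ} (hn : 2 ≤ n) {μ : Fin n → ℝ}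
    (hμ : Antitone μ) (hlast : μ ⟨n - 1, by omega⟩ = 0) :
    ((n : ℝ) - 1) * ∑ i, μ i ^ 4 - (∑ i, μ i ^ 2) ^ 2
      ≤ ((n : ℝ) - 1) * (μ ⟨0, by omega⟩ - μ ⟨n - 2, by omega⟩) ^ 2 * ∑ i, μ i ^ 2 := by
  set s := univ.erase (⟨n - 1, by omega⟩ : Fin n)
  have hsum (k : ℕ) (hk : k ≠ 0) : ∑ i ∈ s, μ i ^ k = ∑ i, μ i ^ k :=
    sum_erase _ (by rw [hlast, zero_pow hk])
  have hcard : (#s : ℝ) = n - 1 := by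
    rw [card_erase_of_mem (mem_univ _), card_univ, Fintype.card_fin, Nat.cast_sub (by omega),
      Nat.cast_one]
  have hbounds : ∀ i ∈ s, μ i ∈ Set.Icc (μ ⟨n - 2, by omega⟩) (μ ⟨0, by omega⟩) := by
    intro i hi
    have hne : (i : ℕ) ≠ n - 1 := fun h ↦ (mem_erase.1 hi).1 (Fin.ext h)
    exact ⟨hμ (Fin.le_def.2 (by simp only; omega)), hμ (Fin.le_def.2 (Nat.zero_le _))⟩
  have hnonneg : 0 ≤ μ ⟨n - 2, by omega⟩ := hlast ▸ hμ (Fin.le_def.2 (by simp only; omega))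
  have := s.card_mul_sum_pow_four_sub_sq_le hnonneg hbounds
  rwa [hsum 2 two_ne_zero, hsum 4 four_ne_zero, hcard] at this

namespace IsLapEigSeq

variable {n : ℕ} {G : SimpleGraph (Fin n)} [DecidableRel G.Adj] {μ : Fin n → ℝ}

theorem trace_pow (hμ : IsLapEigSeq G μ) (k : ℕ) : ((G.lapMatrix ℝ) ^ k).trace = ∑ i, μ i ^ k :=
  (G.isHermitian_lapMatrix (R := ℝ)).trace_pow_eq_sum_pow_of_charpoly_eq_prod hμ.2 k

theorem last_eq_zero (hμ : IsLapEigSeq G μ) (hn : 0 < n) : μ ⟨n - 1, by omega⟩ = 0 := by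
  have : Nonempty (Fin n) := ⟨⟨0, hn⟩⟩
  have hprod : ∏ i, μ i = 0 := by
    rw [← Matrix.det_eq_prod_of_charpoly_eq_prod hμ.2, G.det_lapMatrix_eq_zero]
  obtain ⟨i, -, hi⟩ := prod_eq_zero_iff.1 hprod
  refine le_antisymm ?_ ((G.posSemidef_lapMatrix ℝ).nonneg_of_charpoly_eq_prod hμ.2 _)
  exact hi ▸ hμ.1 i _ (Fin.le_def.2 (by simp only; omega))

end IsLapEigSeq

/-- with `Υ = trace(L(G)⁴)` and `Zg(G)` the first Zagreb index, for a graph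
with `n ≥ 2` vertices and `m ≥ 1` edges,
`√((Υ(n-1) - (Zg+2m)²)/((n-1)(Zg+2m))) ≤ S_L(G)`. -/
theorem sqrt_bound_le_laplacianSpread
    {n : ℕ} (hn : 2 ≤ n) (G : SimpleGraph (Fin n)) [DecidableRel G.Adj]
    (m : ℕ) (hm : G.edgeFinset.card = m)
    (μ : Fin n → ℝ) (hμ : IsLapEigSeq G μ) :
    Real.sqrt
        ((Matrix.trace ((G.lapMatrix ℝ) ^ 4) * ((n : ℝ) - 1)
            - ((∑ v : Fin n, (G.degree v : ℝ) ^ 2) + 2 * (m : ℝ)) ^ 2)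
          / (((n : ℝ) - 1) * ((∑ v : Fin n, (G.degree v : ℝ) ^ 2) + 2 * (m : ℝ))))
      ≤ μ ⟨0, by omega⟩ - μ ⟨n - 2, by omega⟩ := by
  have hZg : ∑ v, (G.degree v : ℝ) ^ 2 + 2 * m = ∑ i, μ i ^ 2 := by
    rw [← hm, ← G.trace_lapMatrix_sq, hμ.trace_pow]
  have hn1 : (0 : ℝ) ≤ n - 1 := by
    have : (2 : ℝ) ≤ n := by exact_mod_cast hn
    linarith
  have hspread : 0 ≤ μ ⟨0, by omega⟩ - μ ⟨n - 2, by omega⟩ :=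
    sub_nonneg.2 (hμ.1 _ _ (Fin.le_def.2 (Nat.zero_le _)))
  rw [hμ.trace_pow, hZg, Real.sqrt_le_left hspread]
  -- for an edgeless graph the denominator is `0`, and so is the quotient
  refine div_le_of_le_mul₀ (mul_nonneg hn1 (by positivity)) (sq_nonneg _) ?_
  have := Antitone.card_sub_one_mul_sum_pow_four_sub_sq_le hn hμ.1 (hμ.last_eq_zero (by omega))
  linarith
end

section
/- Let G be a simple graph with n ≥ 1 vertices, m edges, and Laplacian eigenvalues μ₁ ≥ … ≥ μ_{n−1} ≥ μₙ = 0, and let φ be a real number with μ_{n−1} ≤ φ ≤ μ₁. Then (2/n) · | n·Zg(G) + 2mn + (n−1)φ² − 4m(m + φ) |^{1/2} ≤ S_L(G), where Zg(G) is the first Zagreb index of G. -/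
/-!
Replacing the eigenvalue `μₙ = 0` by `φ` yields `n` reals `aᵢ ∈ [μ_{n-1}, μ₁]` with
`∑ aᵢ = 2m + φ` and `∑ aᵢ² = Zg(G) + 2m + φ²` (the power sums of the Laplacian spectrum are
`tr L = ∑ dᵢ` and `tr L² = ∑ dᵢ² + ∑ dᵢ`). The quantity under the root is therefore
`n ∑ aᵢ² - (∑ aᵢ)²`, which is nonnegative by Cauchy–Schwarz and at most `(n (μ₁ - μ_{n-1}) / 2)²`
by Popoviciu's inequality.
-/

open Finset Polynomial

namespace Finset

variable {ι : Type*}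

theorem sum_comp_update_of_apply_eq_zero {α M : Type*} [AddCommMonoid M] [DecidableEq ι]
    {s : Finset ι} {i : ι} (hi : i ∈ s) (g : α → M) {f : ι → α} (hf : g (f i) = 0) (b : α) :
    ∑ j ∈ s, g (Function.update f i b j) = g b + ∑ j ∈ s, g (f j) := by
  rw [sum_eq_add_sum_sdiff_singleton_of_mem hi (fun j => g (f j)), hf, zero_add,
    ← sum_update_of_mem hi]
  exact sum_congr rfl fun j _ => Function.apply_update (fun _ => g) f i b j

theorem card_mul_sum_sq_sub_sq_sum_le_s18 {R : Type*} [Field R] [LinearOrder R] [IsStrictOrderedRing R]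
    (s : Finset ι) (a : ι → R) {p q : R}
    (hp : ∀ i ∈ s, p ≤ a i) (hq : ∀ i ∈ s, a i ≤ q) :
    #s * ∑ i ∈ s, a i ^ 2 - (∑ i ∈ s, a i) ^ 2 ≤ (#s * (q - p) / 2) ^ 2 := by
  have hprod : 0 ≤ ∑ i ∈ s, (q - a i) * (a i - p) :=
    sum_nonneg fun i hi => mul_nonneg (sub_nonneg.2 (hq i hi)) (sub_nonneg.2 (hp i hi))
  have hexpand : ∑ i ∈ s, (q - a i) * (a i - p)
      = (p + q) * ∑ i ∈ s, a i - #s * (p * q) - ∑ i ∈ s, a i ^ 2 := by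
    simp only [mul_sum, ← nsmul_eq_mul, ← sum_const, ← sum_sub_distrib]
    exact sum_congr rfl fun i _ => by ring
  -- `#s * ∑ aᵢ² ≤ #s * ((p + q) * ∑ aᵢ - #s * p * q)`, and the right side minus `(∑ aᵢ)²` is
  -- `(#s * (q - p) / 2)² - (∑ aᵢ - #s * (p + q) / 2)²`.
  nlinarith [sq_nonneg (∑ i ∈ s, a i - #s * (p + q) / 2), (Nat.cast_nonneg #s : (0 : R) ≤ #s)]

theorem two_div_card_mul_sqrt_abs_card_mul_sum_sq_sub_sq_sum_le {s : Finset ι}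
    (hs : s.Nonempty) (a : ι → ℝ) {p q : ℝ}
    (hp : ∀ i ∈ s, p ≤ a i) (hq : ∀ i ∈ s, a i ≤ q) :
    2 / #s * √|#s * ∑ i ∈ s, a i ^ 2 - (∑ i ∈ s, a i) ^ 2| ≤ q - p := by
  obtain ⟨i, hi⟩ := hs
  have hpq : 0 ≤ q - p := sub_nonneg.2 ((hp i hi).trans (hq i hi))
  have hcard : (0 : ℝ) < #s := by exact_mod_cast card_pos.2 ⟨i, hi⟩
  rw [abs_of_nonneg (sub_nonneg.2 (sq_sum_le_card_mul_sum_sq))]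
  calc 2 / #s * √(#s * ∑ i ∈ s, a i ^ 2 - (∑ i ∈ s, a i) ^ 2)
      ≤ 2 / #s * √((#s * (q - p) / 2) ^ 2) := by
        gcongr; exact card_mul_sum_sq_sub_sq_sum_le_s18 s a hp hq
    _ = q - p := by rw [Real.sqrt_sq (by positivity)]; field_simp

end Finset

namespace Matrix

variable {ι : Type*} [Fintype ι] [DecidableEq ι]

theorem mem_spectrum_iff_exists_eq_of_charpoly_eq_prod {K : Type*} [Field K] {A : Matrix ι ι K}
    {μ : ι → K} (hμ : A.charpoly = ∏ i, (X - C (μ i))) {x : K} :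
    x ∈ spectrum K A ↔ ∃ i, μ i = x := by
  rw [mem_spectrum_iff_isRoot_charpoly, hμ, isRoot_prod]
  simp [sub_eq_zero, eq_comm]

theorem IsHermitian.trace_mul_self_eq_sum_eigenvalues_sq {𝕜 : Type*} [RCLike 𝕜]
    {A : Matrix ι ι 𝕜} (hA : A.IsHermitian) :
    (A * A).trace = ∑ i, (hA.eigenvalues i : 𝕜) ^ 2 := by
  conv_lhs => rw [hA.spectral_theorem, ← map_mul, Unitary.conjStarAlgAut_apply, trace_mul_cycle,
    Unitary.coe_star_mul_self, one_mul, diagonal_mul_diagonal, trace_diagonal]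
  simp [sq]

theorem IsHermitian.sum_comp_eq_sum_comp_eigenvalues {A : Matrix ι ι ℝ} (hA : A.IsHermitian)
    {μ : ι → ℝ} (hμ : A.charpoly = ∏ i, (X - C (μ i))) (f : ℝ → ℝ) :
    ∑ i, f (μ i) = ∑ i, f (hA.eigenvalues i) := by
  have hroots : univ.val.map μ = univ.val.map hA.eigenvalues := by
    have h := hA.roots_charpoly_eq_eigenvalues
    rw [hμ, roots_prod _ _ (prod_ne_zero_iff.2 fun i _ => X_sub_C_ne_zero (μ i))] at h
    simpa using h
  simpa only [Multiset.map_map, Function.comp_def, sum_map_val]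
    using congr_arg (fun s => (s.map f).sum) hroots

end Matrix

namespace SimpleGraph

variable {V : Type*} [Fintype V] [DecidableEq V] (G : SimpleGraph V) [DecidableRel G.Adj]

theorem trace_lapMatrix (R : Type*) [Ring R] :
    (G.lapMatrix R).trace = ∑ v, (G.degree v : R) := by
  simp [lapMatrix, degMatrix, Matrix.trace_sub]

theorem lapMatrix_mul_self_apply_self (R : Type*) [Ring R] (v : V) :
    (G.lapMatrix R * G.lapMatrix R) v v = (G.degree v : R) ^ 2 + G.degree v := by
  simp only [lapMatrix, degMatrix, sub_mul, mul_sub, Matrix.sub_apply, Matrix.diagonal_mul_diagonal,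
    Matrix.diagonal_mul, Matrix.mul_diagonal, adjMatrix_mul_self_apply_self, adjMatrix_apply,
    Matrix.diagonal_apply_eq, G.irrefl, if_false, mul_zero, zero_mul, sub_zero, zero_sub,
    sub_neg_eq_add, sq]

theorem trace_lapMatrix_mul_self (R : Type*) [Ring R] :
    (G.lapMatrix R * G.lapMatrix R).trace = ∑ v, ((G.degree v : R) ^ 2 + G.degree v) :=
  sum_congr rfl fun v _ => G.lapMatrix_mul_self_apply_self R v

theorem sum_of_lapMatrix_charpoly_eq_prod {μ : V → ℝ}
    (hμ : (G.lapMatrix ℝ).charpoly = ∏ v, (X - C (μ v))) :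
    ∑ v, μ v = 2 * #G.edgeFinset := by
  have hL := G.isHermitian_lapMatrix ℝ
  refine (hL.sum_comp_eq_sum_comp_eigenvalues hμ id).trans ?_
  have h := hL.trace_eq_sum_eigenvalues
  simp only [RCLike.ofReal_real_eq_id, id, trace_lapMatrix] at h ⊢
  rw [← h]
  exact_mod_cast G.sum_degrees_eq_twice_card_edges

theorem sum_sq_of_lapMatrix_charpoly_eq_prod {μ : V → ℝ}
    (hμ : (G.lapMatrix ℝ).charpoly = ∏ v, (X - C (μ v))) :
    ∑ v, μ v ^ 2 = ∑ v, (G.degree v : ℝ) ^ 2 + 2 * #G.edgeFinset := by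
  have hL := G.isHermitian_lapMatrix ℝ
  rw [hL.sum_comp_eq_sum_comp_eigenvalues hμ (· ^ 2)]
  have h := hL.trace_mul_self_eq_sum_eigenvalues_sq
  simp only [RCLike.ofReal_real_eq_id, id, trace_lapMatrix_mul_self, sum_add_distrib] at h
  rw [← h]
  exact_mod_cast congr_arg _ G.sum_degrees_eq_twice_card_edges

theorem nonneg_of_lapMatrix_charpoly_eq_prod {μ : V → ℝ}
    (hμ : (G.lapMatrix ℝ).charpoly = ∏ v, (X - C (μ v))) (v : V) : 0 ≤ μ v :=
  (Matrix.posSemidef_iff_isHermitian_and_spectrum_nonneg.1 (G.posSemidef_lapMatrix ℝ)).2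
    ((Matrix.mem_spectrum_iff_exists_eq_of_charpoly_eq_prod hμ).2 ⟨v, rfl⟩)

theorem exists_eq_zero_of_lapMatrix_charpoly_eq_prod [Nonempty V] {μ : V → ℝ}
    (hμ : (G.lapMatrix ℝ).charpoly = ∏ v, (X - C (μ v))) : ∃ v, μ v = 0 := by
  refine (Matrix.mem_spectrum_iff_exists_eq_of_charpoly_eq_prod hμ).1
    ((spectrum.zero_mem_iff ℝ).2 ?_)
  rw [Matrix.isUnit_iff_isUnit_det, G.det_lapMatrix_eq_zero]
  exact not_isUnit_zero

end SimpleGraph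

theorem IsLapEigSeq.apply_sub_one_eq_zero {n : ℕ} {G : SimpleGraph (Fin n)} [DecidableRel G.Adj]
    {μ : Fin n → ℝ} (hμ : IsLapEigSeq G μ) (hn : 1 ≤ n) : μ ⟨n - 1, by omega⟩ = 0 := by
  have : Nonempty (Fin n) := ⟨⟨0, hn⟩⟩
  obtain ⟨k, hk⟩ := G.exists_eq_zero_of_lapMatrix_charpoly_eq_prod hμ.2
  refine le_antisymm ?_ (G.nonneg_of_lapMatrix_charpoly_eq_prod hμ.2 _)
  exact hk ▸ hμ.1 k _ (Fin.le_def.2 (by simp only; omega))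

/-- for `μ_{n-1} ≤ φ ≤ μ₁`,
`(2/n)·|n·Zg(G) + 2mn + (n-1)φ² - 4m(m+φ)|^{1/2} ≤ S_L(G)`. -/
theorem sqrt_abs_bound_phi_le_laplacianSpread
    {n : ℕ} (hn : 1 ≤ n) (G : SimpleGraph (Fin n)) [DecidableRel G.Adj]
    (m : ℕ) (hm : G.edgeFinset.card = m)
    (μ : Fin n → ℝ) (hμ : IsLapEigSeq G μ)
    (φ : ℝ) (hφ₁ : μ ⟨n - 2, by omega⟩ ≤ φ) (hφ₂ : φ ≤ μ ⟨0, by omega⟩) :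
    2 / (n : ℝ) *
        Real.sqrt |(n : ℝ) * (∑ v : Fin n, (G.degree v : ℝ) ^ 2) + 2 * (m : ℝ) * (n : ℝ)
          + ((n : ℝ) - 1) * φ ^ 2 - 4 * (m : ℝ) * ((m : ℝ) + φ)|
      ≤ μ ⟨0, by omega⟩ - μ ⟨n - 2, by omega⟩ := by
  set last : Fin n := ⟨n - 1, by omega⟩
  set a := Function.update μ last φ
  have hlast : μ last = 0 := hμ.apply_sub_one_eq_zero hn
  have hsum : ∑ i, a i = φ + 2 * m := by
    have h := sum_comp_update_of_apply_eq_zero (mem_univ last) id hlast φ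
    simpa only [id, G.sum_of_lapMatrix_charpoly_eq_prod hμ.2, hm] using h
  have hsum_sq : ∑ i, a i ^ 2 = φ ^ 2 + (∑ v, (G.degree v : ℝ) ^ 2 + 2 * m) := by
    rw [sum_comp_update_of_apply_eq_zero (mem_univ last) (· ^ 2) (by simp [hlast]),
      G.sum_sq_of_lapMatrix_charpoly_eq_prod hμ.2, hm]
  have hbounds : ∀ i ∈ univ, μ ⟨n - 2, by omega⟩ ≤ a i ∧ a i ≤ μ ⟨0, by omega⟩ := by
    intro i _
    by_cases hi : i = last
    · simpa [a, hi] using ⟨hφ₁, hφ₂⟩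
    · have hi' : i.val ≤ n - 2 := by
        have := Fin.val_ne_of_ne hi
        simp only [last] at this
        omega
      simp only [a, Function.update_of_ne hi]
      exact ⟨hμ.1 _ _ (Fin.le_def.2 hi'), hμ.1 _ _ (Fin.le_def.2 (Nat.zero_le _))⟩
  have key := two_div_card_mul_sqrt_abs_card_mul_sum_sq_sub_sq_sum_le ⟨last, mem_univ _⟩ a
    (fun i hi => (hbounds i hi).1) (fun i hi => (hbounds i hi).2)
  rw [card_univ, Fintype.card_fin, hsum, hsum_sq] at key
  convert key using 4
  ring
end

section
/- Let a = (a₁, …, aₙ) and b = (b₁, …, bₙ) be positive n-vectors with 0 < m₁ ≤ aᵢ ≤ M₁ and 0 < m₂ ≤ bᵢ ≤ M₂ for all i ∈ {1, …, n}. Then (Σᵢ aᵢ²)/(Σᵢ aᵢbᵢ) − (Σᵢ aᵢbᵢ)/(Σᵢ bᵢ²) ≤ ( (M₁/m₂)^{1/2} − (m₁/M₂)^{1/2} )². -/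
/-!
Put `m = m₁ / M₂` and `M = M₁ / m₂`, so that `m bᵢ ≤ aᵢ ≤ M bᵢ`. Summing
`(aᵢ - m bᵢ)(M bᵢ - aᵢ) ≥ 0` gives the Diaz–Metcalf inequality
`Σ aᵢ² + m M Σ bᵢ² ≤ (m + M) Σ aᵢbᵢ`, hence
`Σ aᵢ² / Σ aᵢbᵢ - Σ aᵢbᵢ / Σ bᵢ² ≤ m + M - (m M x⁻¹ + x)` with `x = Σ aᵢbᵢ / Σ bᵢ²`,
and AM–GM bounds `m M x⁻¹ + x` below by `2 √(m M)`.
-/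

open Finset

theorem two_sqrt_le_div_add {c x : ℝ} (hc : 0 ≤ c) (hx : 0 < x) :
    2 * √c ≤ c / x + x := by
  have hsq : √c ^ 2 = c := Real.sq_sqrt hc
  have hexpand : c / x + x - 2 * √c = (√c - x) ^ 2 / x := by
    field_simp
    rw [sub_sq, hsq]
    ring
  have : 0 ≤ (√c - x) ^ 2 / x := by positivity
  linarith

theorem sq_add_mul_mul_sq_le {a b m M : ℝ} (hm : m * b ≤ a) (hM : a ≤ M * b) :
    a ^ 2 + m * M * b ^ 2 ≤ (m + M) * (a * b) := by
  nlinarith [mul_nonneg (sub_nonneg.2 hm) (sub_nonneg.2 hM)]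

theorem Finset.sum_sq_add_mul_mul_sum_sq_le {ι : Type*} (s : Finset ι) {a b : ι → ℝ} {m M : ℝ}
    (hm : ∀ i ∈ s, m * b i ≤ a i) (hM : ∀ i ∈ s, a i ≤ M * b i) :
    ∑ i ∈ s, a i ^ 2 + m * M * ∑ i ∈ s, b i ^ 2 ≤ (m + M) * ∑ i ∈ s, a i * b i := by
  rw [mul_sum, mul_sum, ← sum_add_distrib]
  exact sum_le_sum fun i hi => sq_add_mul_mul_sq_le (hm i hi) (hM i hi)

theorem div_sub_div_le_sq_sqrt_sub_sqrt {A B S m M : ℝ} (hm : 0 ≤ m) (hM : 0 ≤ M)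
    (hS : 0 < S) (hB : 0 < B) (h : A + m * M * B ≤ (m + M) * S) :
    A / S - S / B ≤ (√M - √m) ^ 2 := by
  have hA : A / S ≤ m + M - m * M / (S / B) := by
    rw [div_div_eq_mul_div, div_le_iff₀ hS, sub_mul, div_mul_cancel₀ _ hS.ne']
    linarith
  have hamgm := two_sqrt_le_div_add (mul_nonneg hm hM) (div_pos hS hB)
  have hrhs : (√M - √m) ^ 2 = M + m - 2 * √(m * M) := by
    rw [Real.sqrt_mul hm, sub_sq, Real.sq_sqrt hm, Real.sq_sqrt hM]
    ring
  linarith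

theorem div_mul_le_of_le_of_le {m₁ M₂ a b : ℝ} (hM₂ : 0 < M₂) (ha : m₁ ≤ a) (hb₀ : 0 ≤ b)
    (hb : b ≤ M₂) (ha₀ : 0 ≤ a) : m₁ / M₂ * b ≤ a := by
  rw [div_mul_eq_mul_div, div_le_iff₀ hM₂]
  exact mul_le_mul ha hb hb₀ ha₀

theorem le_div_mul_of_le_of_le {M₁ m₂ a b : ℝ} (hm₂ : 0 < m₂) (ha : a ≤ M₁) (hb : m₂ ≤ b)
    (hM₁ : 0 ≤ M₁) : a ≤ M₁ / m₂ * b := by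
  rw [div_mul_eq_mul_div, le_div_iff₀ hm₂]
  exact mul_le_mul ha hb hm₂.le hM₁

/-- a complement of Cauchy's inequality: if `0 < m₁ ≤ aᵢ ≤ M₁` and
`0 < m₂ ≤ bᵢ ≤ M₂` for all `i`, then
`(Σ aᵢ²)/(Σ aᵢbᵢ) - (Σ aᵢbᵢ)/(Σ bᵢ²) ≤ (√(M₁/m₂) - √(m₁/M₂))²`. -/
theorem complement_cauchy_inequality
    {n : ℕ} (hn : 1 ≤ n) (a b : Fin n → ℝ) (m₁ M₁ m₂ M₂ : ℝ)
    (hm₁ : 0 < m₁) (hm₂ : 0 < m₂)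
    (ha : ∀ i, m₁ ≤ a i ∧ a i ≤ M₁) (hb : ∀ i, m₂ ≤ b i ∧ b i ≤ M₂) :
    (∑ i : Fin n, (a i) ^ 2) / (∑ i : Fin n, a i * b i)
        - (∑ i : Fin n, a i * b i) / (∑ i : Fin n, (b i) ^ 2)
      ≤ (Real.sqrt (M₁ / m₂) - Real.sqrt (m₁ / M₂)) ^ 2 := by
  let i₀ : Fin n := ⟨0, hn⟩
  have hne : (univ : Finset (Fin n)).Nonempty := ⟨i₀, mem_univ _⟩
  have ha₀ i : 0 < a i := hm₁.trans_le (ha i).1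
  have hb₀ i : 0 < b i := hm₂.trans_le (hb i).1
  have hM₁ : 0 < M₁ := (ha₀ i₀).trans_le (ha i₀).2
  have hM₂ : 0 < M₂ := (hb₀ i₀).trans_le (hb i₀).2
  have hdm := univ.sum_sq_add_mul_mul_sum_sq_le
    (fun i _ => div_mul_le_of_le_of_le hM₂ (ha i).1 (hb₀ i).le (hb i).2 (ha₀ i).le)
    (fun i _ => le_div_mul_of_le_of_le hm₂ (ha i).2 (hb i).1 hM₁.le)
  exact div_sub_div_le_sq_sqrt_sub_sqrt (div_pos hm₁ hM₂).le (div_pos hM₁ hm₂).le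
    (sum_pos (fun i _ => mul_pos (ha₀ i) (hb₀ i)) hne)
    (sum_pos (fun i _ => pow_pos (hb₀ i) 2) hne) hdm
end
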